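/- arXiv:2010.01561 — 3 statements merged into one kernel-verified Lean document; each statement's English description precedes it below -/
import Mathlib

section
/- Let 1 < p < ∞ and λ = 0. Suppose r : [0,π_p] → ℝ is continuous and the boundary value problem (|u′|^{p−2}u′)′ + r(x)|u|^{p−2}u = 0 on (0,π_p), u(0) = u(π_p) = 0, has a nontrivial solution. Then ∫₀^{π_p} r_+(x) dx > 2^p / π_p^{p−1}. -/
/-!
Let `M = max |u|`, attained at `c`. Since `u(0) = u(π_p) = 0`, we have `2M ≤ ∫ |u'|`, and Hölder
gives `(2M)^p ≤ π_p^(p-1) ∫ |u'|^p`. Multiplying the equation by `u` and integrating by parts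
gives `∫ |u'|^p = ∫ r |u|^p ≤ M^p ∫ r₊`. The last inequality is strict: if `c` is the first point
where `|u|` reaches `M`, then `u'(c) = 0`, so the same identity on `[0, c]` gives
`∫₀^c r |u|^p = ∫₀^c |u'|^p > 0`; hence `r > 0` somewhere in `(0, c)`, where `|u| < M`.
-/

/-- The generalized π: `π_p = 2 ∫₀¹ (1 - tᵖ)^(-1/p) dt`. -/
noncomputable def piP (p : ℝ) : ℝ := 2 * ∫ t in (0:ℝ)..1, (1 - t ^ p) ^ (-(1 / p))

/-- `u` (with continuous derivative `u'` on `[0, π_p]`) is a nontrivial solution of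
`(|u'|^(p-2) u')' + (λ + r x) |u|^(p-2) u = 0` on `(0, π_p)` with `u 0 = u π_p = 0`. -/
def IsNontrivialSolution (p lam : ℝ) (r u u' : ℝ → ℝ) : Prop :=
  (∃ x ∈ Set.Icc (0:ℝ) (piP p), u x ≠ 0) ∧
  ContinuousOn u' (Set.Icc 0 (piP p)) ∧
  (∀ x ∈ Set.Icc (0:ℝ) (piP p), HasDerivWithinAt u (u' x) (Set.Icc 0 (piP p)) x) ∧
  u 0 = 0 ∧ u (piP p) = 0 ∧
  ∀ x ∈ Set.Ioo (0:ℝ) (piP p),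
    HasDerivAt (fun y => |u' y| ^ (p - 2) * u' y)
      (-((lam + r x) * |u x| ^ (p - 2) * u x)) x

open Set Filter Topology MeasureTheory Real

lemma abs_rpow_sub_two_mul_self_mul_self {p : ℝ} (hp : p ≠ 0) (t : ℝ) :
    |t| ^ (p - 2) * t * t = |t| ^ p := by
  rcases eq_or_ne t 0 with rfl | ht
  · simp [zero_rpow hp]
  · rw [mul_assoc, ← abs_mul_abs_self, ← pow_two, ← rpow_two, ← rpow_add (abs_pos.2 ht),
      sub_add_cancel]

lemma continuous_abs_rpow_sub_two_mul_self {p : ℝ} (hp : 1 < p) :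
    Continuous fun t : ℝ => |t| ^ (p - 2) * t := by
  refine continuous_iff_continuousAt.2 fun t => ?_
  rcases eq_or_ne t 0 with rfl | ht
  · have hbound : ∀ s : ℝ, ‖|s| ^ (p - 2) * s‖ ≤ |s| ^ (p - 1) := fun s => by
      rcases eq_or_ne s 0 with rfl | hs
      · simp [zero_rpow (by linarith : p - 1 ≠ 0)]
      · rw [norm_mul, norm_of_nonneg (rpow_nonneg (abs_nonneg s) _), norm_eq_abs,
          ← rpow_add_one (abs_ne_zero.2 hs)]
        exact le_of_eq (by ring_nf)
    have hlim : Tendsto (fun s : ℝ => |s| ^ (p - 1)) (𝓝 0) (𝓝 0) := by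
      simpa [zero_rpow (by linarith : p - 1 ≠ 0)] using
        (continuous_abs.rpow_const (p := p - 1) fun _ => Or.inr (by linarith)).tendsto (0 : ℝ)
    simpa [ContinuousAt] using squeeze_zero_norm hbound hlim
  · exact (continuous_abs.continuousAt.rpow_const (Or.inl (abs_ne_zero.2 ht))).mul continuousAt_id

lemma rpow_integral_le_mul_integral_rpow {p a b : ℝ} (hp : 1 < p) (hab : a ≤ b) {f : ℝ → ℝ}
    (hf : ContinuousOn f (Icc a b)) (hf0 : ∀ x ∈ Icc a b, 0 ≤ f x) :
    (∫ x in a..b, f x) ^ p ≤ (b - a) ^ (p - 1) * ∫ x in a..b, f x ^ p := by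
  rw [intervalIntegral.integral_of_le hab, intervalIntegral.integral_of_le hab]
  set μ := volume.restrict (Ioc a b)
  have : IsFiniteMeasure μ := isFiniteMeasure_restrict.2 measure_Ioc_lt_top.ne
  have hμ : μ.real univ = b - a := by
    rw [measureReal_restrict_apply_univ, volume_real_Ioc_of_le hab]
  have hf0' : 0 ≤ᵐ[μ] f := (ae_restrict_iff' measurableSet_Ioc).2 <|
    .of_forall fun x hx => hf0 x (Ioc_subset_Icc_self hx)
  obtain ⟨C, hC⟩ := isCompact_Icc.exists_bound_of_continuousOn hf
  have hfLp : MemLp f (ENNReal.ofReal p) μ :=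
    .of_bound ((hf.mono Ioc_subset_Icc_self).aestronglyMeasurable measurableSet_Ioc) C <|
      (ae_restrict_iff' measurableSet_Ioc).2 <| .of_forall fun x hx => hC x (Ioc_subset_Icc_self hx)
  have hholder := integral_mul_le_Lp_mul_Lq_of_nonneg
    ((holderConjugate_iff_eq_conjExponent hp).2 rfl) hf0' (.of_forall fun _ => zero_le_one)
    hfLp (memLp_const (1 : ℝ))
  simp only [mul_one, one_rpow, integral_const, smul_eq_mul, hμ] at hholder
  have hI : 0 ≤ ∫ x, f x ^ p ∂μ :=
    integral_nonneg_of_ae <| hf0'.mono fun x hx => rpow_nonneg hx p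
  calc (∫ x, f x ∂μ) ^ p
      ≤ ((∫ x, f x ^ p ∂μ) ^ (1 / p) * (b - a) ^ (1 / (p / (p - 1)))) ^ p :=
        rpow_le_rpow (integral_nonneg_of_ae hf0') hholder (by linarith)
    _ = (b - a) ^ (p - 1) * ∫ x, f x ^ p ∂μ := by
        rw [mul_rpow (rpow_nonneg hI _) (rpow_nonneg (sub_nonneg.2 hab) _), ← rpow_mul hI,
          ← rpow_mul (sub_nonneg.2 hab), one_div_mul_cancel (by linarith), rpow_one,
          show 1 / (p / (p - 1)) * p = p - 1 by field_simp, mul_comm]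

lemma abs_sub_le_integral_abs_deriv {a b : ℝ} {u u' : ℝ → ℝ} (hab : a ≤ b)
    (hu : ContinuousOn u (Icc a b)) (hu' : ContinuousOn u' (Icc a b))
    (hderiv : ∀ x ∈ Ioo a b, HasDerivAt u (u' x) x) :
    |u b - u a| ≤ ∫ x in a..b, |u' x| := by
  rw [← intervalIntegral.integral_eq_sub_of_hasDerivAt_of_le hab hu hderiv
    (hu'.intervalIntegrable_of_Icc (μ := volume) hab)]
  exact intervalIntegral.abs_integral_le_integral_abs hab

lemma abs_sub_rpow_le_mul_integral_abs_deriv_rpow {p a b : ℝ} {u u' : ℝ → ℝ} (hp : 1 < p)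
    (hab : a ≤ b) (hu : ContinuousOn u (Icc a b)) (hu' : ContinuousOn u' (Icc a b))
    (hderiv : ∀ x ∈ Ioo a b, HasDerivAt u (u' x) x) :
    |u b - u a| ^ p ≤ (b - a) ^ (p - 1) * ∫ x in a..b, |u' x| ^ p :=
  (rpow_le_rpow (abs_nonneg _) (abs_sub_le_integral_abs_deriv hab hu hu' hderiv)
    (by linarith)).trans
    (rpow_integral_le_mul_integral_rpow hp hab hu'.abs fun _ _ => abs_nonneg _)

lemma two_mul_abs_rpow_le_mul_integral_abs_deriv_rpow {p a b c : ℝ} {u u' : ℝ → ℝ} (hp : 1 < p)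
    (hu : ContinuousOn u (Icc a b)) (hu' : ContinuousOn u' (Icc a b))
    (hderiv : ∀ x ∈ Ioo a b, HasDerivAt u (u' x) x) (ha : u a = 0) (hb : u b = 0)
    (hc : c ∈ Icc a b) :
    (2 * |u c|) ^ p ≤ (b - a) ^ (p - 1) * ∫ x in a..b, |u' x| ^ p := by
  have hab := hc.1.trans hc.2
  have hleft := abs_sub_le_integral_abs_deriv hc.1 (hu.mono (Icc_subset_Icc_right hc.2))
    (hu'.mono (Icc_subset_Icc_right hc.2)) fun x hx => hderiv x ⟨hx.1, hx.2.trans_le hc.2⟩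
  have hright := abs_sub_le_integral_abs_deriv hc.2 (hu.mono (Icc_subset_Icc_left hc.1))
    (hu'.mono (Icc_subset_Icc_left hc.1)) fun x hx => hderiv x ⟨hc.1.trans_lt hx.1, hx.2⟩
  rw [ha, sub_zero] at hleft
  rw [hb, zero_sub, abs_neg] at hright
  have hsplit := intervalIntegral.integral_add_adjacent_intervals
    ((hu'.abs.mono (Icc_subset_Icc_right hc.2)).intervalIntegrable_of_Icc (μ := volume) hc.1)
    ((hu'.abs.mono (Icc_subset_Icc_left hc.1)).intervalIntegrable_of_Icc (μ := volume) hc.2)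
  calc (2 * |u c|) ^ p ≤ (∫ x in a..b, |u' x|) ^ p :=
        rpow_le_rpow (by positivity) (by linarith) (by linarith)
    _ ≤ (b - a) ^ (p - 1) * ∫ x in a..b, |u' x| ^ p :=
        rpow_integral_le_mul_integral_rpow hp hab hu'.abs fun _ _ => abs_nonneg _

lemma integral_abs_deriv_rpow_eq {p a b : ℝ} {r u u' : ℝ → ℝ} (hp : 1 < p) (hab : a ≤ b)
    (hr : ContinuousOn r (Icc a b)) (hu : ContinuousOn u (Icc a b))
    (hu' : ContinuousOn u' (Icc a b)) (hderiv : ∀ x ∈ Ioo a b, HasDerivAt u (u' x) x)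
    (hode : ∀ x ∈ Ioo a b, HasDerivAt (fun y => |u' y| ^ (p - 2) * u' y)
      (-(r x * |u x| ^ (p - 2) * u x)) x) :
    ∫ x in a..b, |u' x| ^ p = |u' b| ^ (p - 2) * u' b * u b - |u' a| ^ (p - 2) * u' a * u a +
      ∫ x in a..b, r x * |u x| ^ p := by
  have hp₀ : p ≠ 0 := by linarith
  have hint₁ : IntervalIntegrable (fun x => |u' x| ^ p) volume a b :=
    (hu'.abs.rpow_const fun _ _ => Or.inr (by linarith)).intervalIntegrable_of_Icc hab
  have hint₂ : IntervalIntegrable (fun x => r x * |u x| ^ p) volume a b :=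
    (hr.mul (hu.abs.rpow_const fun _ _ => Or.inr (by linarith))).intervalIntegrable_of_Icc hab
  have hflux : ContinuousOn (fun x => |u' x| ^ (p - 2) * u' x * u x) (Icc a b) :=
    ((continuous_abs_rpow_sub_two_mul_self hp).comp_continuousOn hu').mul hu
  have hftc := intervalIntegral.integral_eq_sub_of_hasDerivAt_of_le hab hflux
    (f' := fun x => |u' x| ^ p - r x * |u x| ^ p)
    (fun x hx => ((hode x hx).mul (hderiv x hx)).congr_deriv <| by
      rw [← abs_rpow_sub_two_mul_self_mul_self hp₀ (u' x),
        ← abs_rpow_sub_two_mul_self_mul_self hp₀ (u x)]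
      ring)
    (hint₁.sub hint₂)
  rw [intervalIntegral.integral_sub hint₁ hint₂] at hftc
  exact eq_add_of_sub_eq hftc

lemma ContinuousOn.exists_first_isMaxOn_Icc {f : ℝ → ℝ} {a b : ℝ} (hab : a ≤ b)
    (hf : ContinuousOn f (Icc a b)) :
    ∃ c ∈ Icc a b, IsMaxOn f (Icc a b) c ∧ ∀ x ∈ Ico a c, f x < f c := by
  obtain ⟨c₀, hc₀, hmax⟩ := isCompact_Icc.exists_isMaxOn (nonempty_Icc.2 hab) hf
  set S := Icc a b ∩ f ⁻¹' {f c₀}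
  have hSbdd : BddBelow S := ⟨a, fun x hx => hx.1.1⟩
  obtain ⟨hc, hfc⟩ : sInf S ∈ S :=
    (hf.preimage_isClosed_of_isClosed isClosed_Icc isClosed_singleton).csInf_mem
      ⟨c₀, hc₀, rfl⟩ hSbdd
  have hfc : f (sInf S) = f c₀ := hfc
  refine ⟨sInf S, hc, fun x hx => hfc ▸ hmax hx, fun x hx => ?_⟩
  have hxab : x ∈ Icc a b := ⟨hx.1, hx.2.le.trans hc.2⟩
  refine (hfc ▸ hmax hxab : f x ≤ f (sInf S)).lt_of_ne fun hfx => ?_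
  exact hx.2.not_ge (csInf_le hSbdd ⟨hxab, hfx.trans hfc⟩)

lemma IsLocalMax.hasDerivAt_eq_zero_of_abs {f : ℝ → ℝ} {f' a : ℝ}
    (h : IsLocalMax (fun x => |f x|) a) (hf : HasDerivAt f f' a) : f' = 0 := by
  rcases le_total 0 (f a) with ha | ha
  · refine IsLocalMax.hasDerivAt_eq_zero (h.mono fun x hx => ?_) hf
    exact (le_abs_self _).trans (hx.trans_eq (abs_of_nonneg ha))
  · refine IsLocalMin.hasDerivAt_eq_zero (h.mono fun x hx => ?_) hf
    calc f a = -|f a| := by rw [abs_of_nonpos ha, neg_neg]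
      _ ≤ -|f x| := neg_le_neg hx
      _ ≤ f x := neg_abs_le _

lemma exists_mem_Ioo_pos_of_integral_pos {f : ℝ → ℝ} {a b : ℝ} (hab : a ≤ b)
    (h : 0 < ∫ x in a..b, f x) : ∃ x ∈ Ioo a b, 0 < f x := by
  by_contra! hf
  rw [intervalIntegral.integral_of_le hab, integral_Ioc_eq_integral_Ioo] at h
  exact h.not_ge (setIntegral_nonpos measurableSet_Ioo hf)

lemma integral_mul_abs_rpow_lt_mul_integral_max {p a b M t : ℝ} {r u : ℝ → ℝ} (hp : 0 < p)
    (hr : ContinuousOn r (Icc a b)) (hu : ContinuousOn u (Icc a b))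
    (hM : ∀ x ∈ Icc a b, |u x| ≤ M) (ht : t ∈ Ioo a b) (hrt : 0 < r t) (hut : |u t| < M) :
    ∫ x in a..b, r x * |u x| ^ p < M ^ p * ∫ x in a..b, max (r x) 0 := by
  rw [← intervalIntegral.integral_const_mul]
  refine intervalIntegral.integral_lt_integral_of_continuousOn_of_le_of_exists_lt
    (ht.1.trans ht.2) (hr.mul (hu.abs.rpow_const fun _ _ => Or.inr hp.le))
    (continuousOn_const.mul (hr.sup continuousOn_const)) (fun x hx => ?_)
    ⟨t, Ioo_subset_Icc_self ht, ?_⟩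
  · calc r x * |u x| ^ p ≤ max (r x) 0 * |u x| ^ p := by gcongr; exact le_max_left _ _
      _ ≤ max (r x) 0 * M ^ p := by gcongr; exact hM x (Ioc_subset_Icc_self hx)
      _ = M ^ p * max (r x) 0 := mul_comm _ _
  · rw [max_eq_left hrt.le, mul_comm]
    exact mul_lt_mul_of_pos_right (rpow_lt_rpow (abs_nonneg _) hut hp) hrt

theorem lyapunov_inequality {p L x₀ : ℝ} {r u u' : ℝ → ℝ} (hp : 1 < p)
    (hr : ContinuousOn r (Icc 0 L)) (hu : ContinuousOn u (Icc 0 L))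
    (hu' : ContinuousOn u' (Icc 0 L)) (hderiv : ∀ x ∈ Ioo 0 L, HasDerivAt u (u' x) x)
    (hode : ∀ x ∈ Ioo 0 L, HasDerivAt (fun y => |u' y| ^ (p - 2) * u' y)
      (-(r x * |u x| ^ (p - 2) * u x)) x)
    (h0 : u 0 = 0) (hL : u L = 0) (hx₀ : x₀ ∈ Icc 0 L) (hux₀ : u x₀ ≠ 0) :
    2 ^ p / L ^ (p - 1) < ∫ x in 0..L, max (r x) 0 := by
  obtain ⟨a, ha, hmax, hfirst⟩ := hu.abs.exists_first_isMaxOn_Icc (hx₀.1.trans hx₀.2)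
  have hM : 0 < |u a| := (abs_pos.2 hux₀).trans_le (hmax hx₀)
  have ha₀ : 0 < a := ha.1.lt_of_ne (by rintro rfl; simp [h0] at hM)
  have haL : a < L := ha.2.lt_of_ne (by rintro rfl; simp [hL] at hM)
  have hsub : Icc 0 a ⊆ Icc 0 L := Icc_subset_Icc_right haL.le
  have hsub' : Ioo 0 a ⊆ Ioo 0 L := Ioo_subset_Ioo_right haL.le
  have hu'a : u' a = 0 :=
    (hmax.isLocalMax (Icc_mem_nhds ha₀ haL)).hasDerivAt_eq_zero_of_abs (hderiv a ⟨ha₀, haL⟩)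
  have henergy_a : ∫ x in 0..a, |u' x| ^ p = ∫ x in 0..a, r x * |u x| ^ p := by
    simpa [hu'a, h0] using integral_abs_deriv_rpow_eq hp ha₀.le (hr.mono hsub) (hu.mono hsub)
      (hu'.mono hsub) (fun x hx => hderiv x (hsub' hx)) fun x hx => hode x (hsub' hx)
  have hpos : 0 < ∫ x in 0..a, r x * |u x| ^ p := by
    have h := abs_sub_rpow_le_mul_integral_abs_deriv_rpow hp ha₀.le (hu.mono hsub)
      (hu'.mono hsub) fun x hx => hderiv x (hsub' hx)
    rw [h0, sub_zero, sub_zero, henergy_a] at h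
    exact pos_of_mul_pos_right ((rpow_pos_of_pos hM p).trans_le h) (rpow_nonneg ha₀.le _)
  obtain ⟨t, ht, hrt⟩ := exists_mem_Ioo_pos_of_integral_pos ha₀.le hpos
  have hupper := integral_mul_abs_rpow_lt_mul_integral_max (by linarith : 0 < p) hr hu
    (fun x hx => hmax hx) (hsub' ht) (pos_of_mul_pos_left hrt (by positivity))
    (hfirst t ⟨ht.1.le, ht.2⟩)
  have hlower := two_mul_abs_rpow_le_mul_integral_abs_deriv_rpow hp hu hu' hderiv h0 hL ha
  have henergy : ∫ x in 0..L, |u' x| ^ p = ∫ x in 0..L, r x * |u x| ^ p := by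
    simpa [h0, hL] using integral_abs_deriv_rpow_eq hp (ha₀.trans haL).le hr hu hu' hderiv hode
  rw [sub_zero, henergy, mul_rpow zero_le_two hM.le] at hlower
  have hLp : 0 < L ^ (p - 1) := rpow_pos_of_pos (ha₀.trans haL) _
  rw [div_lt_iff₀ hLp]
  refine lt_of_mul_lt_mul_right ?_ (rpow_pos_of_pos hM p).le
  calc 2 ^ p * |u a| ^ p ≤ L ^ (p - 1) * ∫ x in 0..L, r x * |u x| ^ p := hlower
    _ < L ^ (p - 1) * (|u a| ^ p * ∫ x in 0..L, max (r x) 0) := mul_lt_mul_of_pos_left hupper hLp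
    _ = (∫ x in 0..L, max (r x) 0) * L ^ (p - 1) * |u a| ^ p := by ring

/-- Lyapunov inequality for `λ = 0`: if `(|u'|^(p-2)u')' + r(x)|u|^(p-2)u = 0`,
`u(0) = u(π_p) = 0` has a nontrivial solution, then `∫₀^{π_p} r₊ > 2^p / π_p^(p-1)`. -/
theorem lyapunov_zero_lambda (p : ℝ) (hp : 1 < p)
    (r u u' : ℝ → ℝ) (hr : ContinuousOn r (Set.Icc 0 (piP p)))
    (hsol : IsNontrivialSolution p 0 r u u') :
    (∫ x in (0:ℝ)..piP p, max (r x) 0) > 2 ^ p / piP p ^ (p - 1) := by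
  obtain ⟨⟨x₀, hx₀, hux₀⟩, hu', hu, h0, hL, hode⟩ := hsol
  exact lyapunov_inequality hp hr (fun x hx => (hu x hx).continuousWithinAt) hu'
    (fun x hx => (hu x (Ioo_subset_Icc_self hx)).hasDerivAt (Icc_mem_nhds hx.1 hx.2))
    (fun x hx => by simpa using hode x hx) h0 hL hx₀ hux₀
end

section
/- Let 1 < p < ∞. For every function u : [0,π_p] → ℝ that is continuously differentiable on [0,π_p] with u(0) = u(π_p) = 0, the Sobolev-type inequality holds: (2^p/π_p^{p−1})·(max_{x∈[0,π_p]} |u(x)|)^p ≤ ∫₀^{π_p} |u′(x)|^p dx. -/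
open MeasureTheory Set Real

theorem piP_nonneg {p : ℝ} (hp : 0 ≤ p) : 0 ≤ piP p :=
  mul_nonneg zero_le_two <| intervalIntegral.integral_nonneg zero_le_one fun _ ht =>
    rpow_nonneg (sub_nonneg.2 (rpow_le_one ht.1 ht.2 hp)) _

theorem rpow_intervalIntegral_le {p : ℝ} (hp : 1 < p) {f : ℝ → ℝ} {a b : ℝ} (hab : a ≤ b)
    (hf : ContinuousOn f (Icc a b)) (hf0 : ∀ x ∈ Icc a b, 0 ≤ f x) :
    (∫ x in a..b, f x) ^ p ≤ (b - a) ^ (p - 1) * ∫ x in a..b, f x ^ p := by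
  obtain ⟨q, hpq⟩ : ∃ q, p.HolderConjugate q := ⟨_, .conjExponent hp⟩
  set μ := volume.restrict (Ioc a b)
  have : IsFiniteMeasure μ := isFiniteMeasure_restrict.2 measure_Ioc_lt_top.ne
  have hμ : μ.real univ = b - a := by simp [μ, hab]
  have hμIcc : ∀ᵐ x ∂μ, x ∈ Icc a b :=
    (ae_restrict_iff' measurableSet_Ioc).2 (ae_of_all _ fun _ => mem_Icc_of_Ioc)
  obtain ⟨C, hC⟩ := isCompact_Icc.exists_bound_of_continuousOn hf
  have hf_Lp : MemLp f (ENNReal.ofReal p) μ :=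
    (memLp_top_of_bound ((hf.mono Ioc_subset_Icc_self).aestronglyMeasurable measurableSet_Ioc) C
      (hμIcc.mono hC)).mono_exponent le_top
  have holder := integral_mul_le_Lp_mul_Lq_of_nonneg hpq (hμIcc.mono hf0)
    (ae_of_all μ fun _ => zero_le_one) hf_Lp (memLp_const 1)
  simp only [mul_one, one_rpow, integral_const, smul_eq_mul, hμ] at holder
  have hfp_nonneg : 0 ≤ ∫ x, f x ^ p ∂μ :=
    integral_nonneg_of_ae (hμIcc.mono fun x hx => rpow_nonneg (hf0 x hx) p)
  rw [intervalIntegral.integral_of_le hab, intervalIntegral.integral_of_le hab]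
  calc (∫ x, f x ∂μ) ^ p ≤ ((∫ x, f x ^ p ∂μ) ^ (1 / p) * (b - a) ^ (1 / q)) ^ p := by
        gcongr
        exact integral_nonneg_of_ae (hμIcc.mono hf0)
    _ = (b - a) ^ (p - 1) * ∫ x, f x ^ p ∂μ := by
        rw [mul_rpow (by positivity) (rpow_nonneg (sub_nonneg.2 hab) _), ← rpow_mul hfp_nonneg,
          ← rpow_mul (sub_nonneg.2 hab), one_div_mul_cancel hpq.ne_zero, rpow_one,
          one_div_mul_eq_div, hpq.div_conj_eq_sub_one, mul_comm]

theorem abs_sub_le_integral_abs_of_hasDerivWithinAt {u u' : ℝ → ℝ} {a b : ℝ} (hab : a ≤ b)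
    (hu' : ContinuousOn u' (Icc a b)) (hu : ∀ x ∈ Icc a b, HasDerivWithinAt u (u' x) (Icc a b) x) :
    |u b - u a| ≤ ∫ x in a..b, |u' x| := by
  have ftc : ∫ x in a..b, u' x = u b - u a :=
    intervalIntegral.integral_eq_sub_of_hasDerivAt_of_le hab
      (fun x hx => (hu x hx).continuousWithinAt)
      (fun x hx => (hu x (Ioo_subset_Icc_self hx)).hasDerivAt (Icc_mem_nhds hx.1 hx.2))
      (hu'.intervalIntegrable_of_Icc hab)
  exact ftc ▸ intervalIntegral.abs_integral_le_integral_abs hab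

theorem two_mul_abs_le_integral_abs_of_hasDerivWithinAt {u u' : ℝ → ℝ} {a b : ℝ}
    (hu' : ContinuousOn u' (Icc a b)) (hu : ∀ x ∈ Icc a b, HasDerivWithinAt u (u' x) (Icc a b) x)
    (hua : u a = 0) (hub : u b = 0) {x : ℝ} (hx : x ∈ Icc a b) :
    2 * |u x| ≤ ∫ y in a..b, |u' y| := by
  have hleft : Icc a x ⊆ Icc a b := Icc_subset_Icc_right hx.2
  have hright : Icc x b ⊆ Icc a b := Icc_subset_Icc_left hx.1
  have h₁ := abs_sub_le_integral_abs_of_hasDerivWithinAt hx.1 (hu'.mono hleft)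
    fun y hy => (hu y (hleft hy)).mono hleft
  have h₂ := abs_sub_le_integral_abs_of_hasDerivWithinAt hx.2 (hu'.mono hright)
    fun y hy => (hu y (hright hy)).mono hright
  rw [hua, sub_zero] at h₁
  rw [hub, zero_sub, abs_neg] at h₂
  rw [← intervalIntegral.integral_add_adjacent_intervals
    ((hu'.mono hleft).abs.intervalIntegrable_of_Icc hx.1)
    ((hu'.mono hright).abs.intervalIntegrable_of_Icc hx.2)]
  linarith

theorem two_rpow_div_mul_sSup_abs_rpow_le_integral {p : ℝ} (hp : 1 < p) {u u' : ℝ → ℝ} {a b : ℝ}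
    (hab : a ≤ b) (hu' : ContinuousOn u' (Icc a b))
    (hu : ∀ x ∈ Icc a b, HasDerivWithinAt u (u' x) (Icc a b) x) (hua : u a = 0) (hub : u b = 0) :
    2 ^ p / (b - a) ^ (p - 1) * sSup ((fun x => |u x|) '' Icc a b) ^ p ≤
      ∫ x in a..b, |u' x| ^ p := by
  obtain ⟨x₀, hx₀, hsup⟩ := isCompact_Icc.exists_sSup_image_eq (nonempty_Icc.2 hab)
    (fun x hx => (hu x hx).continuousWithinAt.abs)
  have hpeak : (2 * |u x₀|) ^ p ≤ (∫ x in a..b, |u' x|) ^ p := by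
    gcongr
    exact two_mul_abs_le_integral_abs_of_hasDerivWithinAt hu' hu hua hub hx₀
  have holder := rpow_intervalIntegral_le hp hab hu'.abs fun x _ => abs_nonneg (u' x)
  rw [hsup, div_mul_eq_mul_div, ← mul_rpow zero_le_two (abs_nonneg _)]
  exact div_le_of_le_mul₀ (rpow_nonneg (sub_nonneg.2 hab) _)
    (intervalIntegral.integral_nonneg hab fun x _ => rpow_nonneg (abs_nonneg _) _)
    ((hpeak.trans holder).trans_eq (mul_comm _ _))

/-- Sobolev-type inequality: `(2^p/π_p^(p-1)) (max |u|)^p ≤ ∫ |u'|^p` for `u`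
continuously differentiable on `[0, π_p]` with `u(0) = u(π_p) = 0`. -/
theorem sobolev_zero_lambda (p : ℝ) (hp : 1 < p)
    (u u' : ℝ → ℝ)
    (hu' : ContinuousOn u' (Set.Icc 0 (piP p)))
    (huderiv : ∀ x ∈ Set.Icc (0:ℝ) (piP p), HasDerivWithinAt u (u' x) (Set.Icc 0 (piP p)) x)
    (hu0 : u 0 = 0) (hupi : u (piP p) = 0) :
    2 ^ p / piP p ^ (p - 1) * (sSup ((fun x => |u x|) '' Set.Icc 0 (piP p))) ^ p ≤
      ∫ x in (0:ℝ)..piP p, |u' x| ^ p := by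
  simpa only [sub_zero] using two_rpow_div_mul_sSup_abs_rpow_le_integral hp
    (piP_nonneg (by linarith)) hu' huderiv hu0 hupi
end

section
/- Let 1 < p < ∞, λ < 0, K = (−λ/(p−1))^{1/p}, and y ∈ (0,π_p/2]. Define u_y : [0,π_p] → ℝ by u_y(x) = sinh_p(Kx)/sinh_p(Ky) for x ∈ [0,y] and u_y(x) = sinh_p(K(π_p−x))/sinh_p(K(π_p−y)) for x ∈ [y,π_p]. Then ∫₀^{π_p} |u_y′(x)|^p dx − λ∫₀^{π_p} |u_y(x)|^p dx = K^{p−1}·((coth_p(Ky))^{p−1} + (coth_p(K(π_p−y)))^{p−1}), where the integrals are taken piecewise on [0,y] and [y,π_p]. -/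
/-- `arcsinh_p x = ∫₀ˣ (1 + tᵖ)^(-1/p) dt`. -/
noncomputable def arcsinhP (p x : ℝ) : ℝ := ∫ t in (0:ℝ)..x, (1 + t ^ p) ^ (-(1 / p))

/-- `sinh_p : [0,∞) → [0,∞)`, defined as the inverse of `arcsinh_p` on `[0,∞)`. -/
noncomputable def sinhP (p : ℝ) : ℝ → ℝ := Function.invFunOn (arcsinhP p) (Set.Ici 0)

/-- `cosh_p x = (1 + sinh_p x ^ p)^(1/p)`. -/
noncomputable def coshP (p x : ℝ) : ℝ := (1 + sinhP p x ^ p) ^ (1 / p)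

/-- `coth_p x = cosh_p x / sinh_p x`. -/
noncomputable def cothP (p x : ℝ) : ℝ := coshP p x / sinhP p x

/-- The function `u_y(x) = sinh_p (K x)/sinh_p (K y)` on `[0, y]`,
`u_y(x) = sinh_p (K (π_p - x))/sinh_p (K (π_p - y))` on `[y, π_p]`. -/
noncomputable def uYh (p K y x : ℝ) : ℝ :=
  if x ≤ y then sinhP p (K * x) / sinhP p (K * y)
  else sinhP p (K * (piP p - x)) / sinhP p (K * (piP p - y))

/-!
On `(0, y)` the function `u_y` is `v_b x = sinh_p (K x) / sinh_p (K b)` with `b = y`, and on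
`(y, π_p)` it is `v_b (π_p - x)` with `b = π_p - y`, so each integral splits into two integrals of
the same kind over `[0, b]`. As `-λ = (p - 1) K ^ p` and `cosh_p ^ p = 1 + sinh_p ^ p`, the
combined integrand `|v_b'| ^ p + (p - 1) K ^ p |v_b| ^ p` equals
`(K / sinh_p (K b)) ^ p (1 + p sinh_p (K x) ^ p)`, and `1 + p sinh_p ^ p` is the derivative of
`sinh_p cosh_p ^ (p - 1)`; evaluating at `K b` gives `K ^ (p - 1) coth_p (K b) ^ (p - 1)`.
-/

open Real Set Filter MeasureTheory intervalIntegral Topology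

lemma integral_eq_add_of_eqOn_Ioo_of_eqOn_Ioo_comp_sub {f g h : ℝ → ℝ} {a b c : ℝ}
    (hab : a ≤ b) (hbc : b ≤ c) (hg : IntervalIntegrable g volume a b)
    (hh : IntervalIntegrable h volume 0 (c - b)) (hfg : EqOn f g (Ioo a b))
    (hfh : EqOn f (h ∘ (c - ·)) (Ioo b c)) :
    ∫ x in a..c, f x = (∫ x in a..b, g x) + ∫ x in (0:ℝ)..(c - b), h x := by
  have hh' : IntervalIntegrable (fun x => h (c - x)) volume b c := by
    simpa using (hh.comp_sub_left c).symm
  rw [← integral_add_adjacent_intervals (hg.congr_uIoo (uIoo_of_le hab ▸ hfg.symm))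
      (hh'.congr_uIoo (uIoo_of_le hbc ▸ hfh.symm)), integral_congr_Ioo_of_le hab hfg,
    integral_congr_Ioo_of_le hbc hfh, Function.comp_def,
    integral_comp_sub_left h, sub_self]

section PHyperbolic

variable {p : ℝ}

lemma continuousOn_arcsinhP_integrand (hp : 0 ≤ p) :
    ContinuousOn (fun t : ℝ => (1 + t ^ p) ^ (-(1 / p))) {t | 0 < 1 + t ^ p} := fun _ ht =>
  ((continuous_const.add (continuous_rpow_const hp)).continuousAt.rpow_const
    (Or.inl (ne_of_gt ht))).continuousWithinAt

lemma intervalIntegrable_arcsinhP_integrand (hp : 0 ≤ p) {x : ℝ} (hx : 0 ≤ x) :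
    IntervalIntegrable (fun t : ℝ => (1 + t ^ p) ^ (-(1 / p))) volume 0 x :=
  ((continuousOn_arcsinhP_integrand hp).mono fun t ht => by
    have : 0 ≤ t := by rw [uIcc_of_le hx] at ht; exact ht.1
    show 0 < 1 + t ^ p
    positivity).intervalIntegrable

lemma hasDerivAt_arcsinhP (hp : 0 ≤ p) {x : ℝ} (hx : 0 ≤ x) :
    HasDerivAt (arcsinhP p) ((1 + x ^ p) ^ (-(1 / p))) x := by
  have hU : IsOpen {t : ℝ | 0 < 1 + t ^ p} :=
    isOpen_lt continuous_const (continuous_const.add (continuous_rpow_const hp))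
  have hxU : 0 < 1 + x ^ p := by positivity
  exact integral_hasDerivAt_right (intervalIntegrable_arcsinhP_integrand hp hx)
    ((continuousOn_arcsinhP_integrand hp).stronglyMeasurableAtFilter hU x hxU)
    ((continuousOn_arcsinhP_integrand hp).continuousAt (hU.mem_nhds hxU))

lemma strictMonoOn_arcsinhP (hp : 0 ≤ p) : StrictMonoOn (arcsinhP p) (Ici 0) := by
  refine strictMonoOn_of_deriv_pos (convex_Ici 0)
    (fun x hx => (hasDerivAt_arcsinhP hp hx).continuousAt.continuousWithinAt) fun x hx => ?_
  rw [interior_Ici] at hx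
  rw [(hasDerivAt_arcsinhP hp (le_of_lt hx)).deriv]
  have : 0 < x := hx
  positivity

lemma arcsinhP_zero : arcsinhP p 0 = 0 := integral_same

lemma mapsTo_arcsinhP (hp : 0 ≤ p) : MapsTo (arcsinhP p) (Ici 0) (Ici 0) := fun x hx => by
  simpa [arcsinhP_zero] using (strictMonoOn_arcsinhP hp).monotoneOn self_mem_Ici hx hx

lemma log_one_add_le_arcsinhP (hp : 1 ≤ p) {x : ℝ} (hx : 0 ≤ x) :
    log (1 + x) ≤ arcsinhP p x := by
  have hint : IntervalIntegrable (fun t : ℝ => (1 + t)⁻¹) volume 0 x :=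
    (continuousOn_const.add continuousOn_id).inv₀ (fun t ht => by
      rw [uIcc_of_le hx] at ht; simp only [Pi.add_apply, id]; linarith [ht.1]) |>.intervalIntegrable
  calc log (1 + x) = ∫ t in (0:ℝ)..x, (1 + t)⁻¹ := by
        rw [integral_comp_add_left (fun t => t⁻¹), integral_inv_of_pos (by norm_num) (by linarith)]
        simp
    _ ≤ arcsinhP p x := by
        refine integral_mono_on hx hint (intervalIntegrable_arcsinhP_integrand (by linarith) hx)
          fun t ht => ?_
        have ht0 : 0 ≤ t := ht.1
        have hle : 1 + t ^ p ≤ (1 + t) ^ p := by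
          simpa using Real.add_rpow_le_rpow_add zero_le_one ht0 hp
        calc (1 + t)⁻¹ = ((1 + t) ^ p) ^ (-(1 / p)) := by
              rw [← rpow_mul (by linarith), mul_neg, mul_one_div_cancel (by linarith), rpow_neg_one]
          _ ≤ (1 + t ^ p) ^ (-(1 / p)) :=
              rpow_le_rpow_of_nonpos (by positivity) hle
                (neg_nonpos.2 (one_div_nonneg.2 (by linarith)))

lemma surjOn_arcsinhP (hp : 1 ≤ p) : SurjOn (arcsinhP p) (Ici 0) (Ici 0) := by
  intro z (hz : 0 ≤ z)
  have hx₀ : 0 ≤ exp z - 1 := by linarith [add_one_le_exp z]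
  have hle : z ≤ arcsinhP p (exp z - 1) := by
    simpa using log_one_add_le_arcsinhP hp hx₀
  obtain ⟨x, hx, hxz⟩ := intermediate_value_Icc hx₀
    (fun t ht => (hasDerivAt_arcsinhP (by linarith) ht.1).continuousAt.continuousWithinAt)
    (show z ∈ Icc (arcsinhP p 0) (arcsinhP p (exp z - 1)) by rw [arcsinhP_zero]; exact ⟨hz, hle⟩)
  exact ⟨x, hx.1, hxz⟩

lemma arcsinhP_sinhP (hp : 1 ≤ p) {z : ℝ} (hz : 0 ≤ z) : arcsinhP p (sinhP p z) = z :=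
  Function.invFunOn_eq (surjOn_arcsinhP hp hz)

lemma sinhP_nonneg (hp : 1 ≤ p) {z : ℝ} (hz : 0 ≤ z) : 0 ≤ sinhP p z :=
  Function.invFunOn_mem (surjOn_arcsinhP hp hz)

lemma sinhP_arcsinhP (hp : 0 ≤ p) {x : ℝ} (hx : 0 ≤ x) : sinhP p (arcsinhP p x) = x :=
  (strictMonoOn_arcsinhP hp).injOn.leftInvOn_invFunOn hx

lemma sinhP_zero (hp : 0 ≤ p) : sinhP p 0 = 0 := by
  simpa [arcsinhP_zero] using sinhP_arcsinhP hp le_rfl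

lemma sinhP_pos (hp : 1 ≤ p) {z : ℝ} (hz : 0 < z) : 0 < sinhP p z := by
  refine (sinhP_nonneg hp hz.le).lt_of_ne fun h => hz.ne ?_
  rw [← arcsinhP_sinhP hp hz.le, ← h, arcsinhP_zero]

lemma monotoneOn_sinhP (hp : 1 ≤ p) : MonotoneOn (sinhP p) (Ici 0) := fun a ha b hb hab =>
  (strictMonoOn_arcsinhP (by linarith : (0:ℝ) ≤ p)).le_iff_le (sinhP_nonneg hp ha)
    (sinhP_nonneg hp hb) |>.1 (by rwa [arcsinhP_sinhP hp ha, arcsinhP_sinhP hp hb])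

lemma Ici_subset_image_sinhP (hp : 0 ≤ p) : Ici 0 ⊆ sinhP p '' Ici 0 := fun x hx =>
  ⟨arcsinhP p x, mapsTo_arcsinhP hp hx, sinhP_arcsinhP hp hx⟩

lemma continuousAt_sinhP (hp : 1 ≤ p) {z : ℝ} (hz : 0 < z) : ContinuousAt (sinhP p) z :=
  continuousAt_of_monotoneOn_of_image_mem_nhds (monotoneOn_sinhP hp) (Ici_mem_nhds hz)
    (mem_of_superset (Ici_mem_nhds (sinhP_pos hp hz)) (Ici_subset_image_sinhP (by linarith)))

lemma continuousOn_sinhP (hp : 1 ≤ p) : ContinuousOn (sinhP p) (Ici 0) := by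
  intro z (hz : 0 ≤ z)
  rcases hz.lt_or_eq with hz | rfl
  · exact (continuousAt_sinhP hp hz).continuousWithinAt
  · refine continuousWithinAt_right_of_monotoneOn_of_image_mem_nhdsWithin (monotoneOn_sinhP hp)
      self_mem_nhdsWithin (mem_of_superset ?_ (Ici_subset_image_sinhP (by linarith)))
    rw [sinhP_zero (by linarith)]
    exact self_mem_nhdsWithin

lemma coshP_pos (hp : 1 ≤ p) {z : ℝ} (hz : 0 ≤ z) : 0 < coshP p z := by
  have := sinhP_nonneg hp hz
  unfold coshP
  positivity

lemma coshP_rpow (hp : 1 ≤ p) {z : ℝ} (hz : 0 ≤ z) : coshP p z ^ p = 1 + sinhP p z ^ p := by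
  have := sinhP_nonneg hp hz
  rw [coshP, ← rpow_mul (by positivity), one_div_mul_cancel (by linarith), rpow_one]

lemma continuousOn_coshP (hp : 1 ≤ p) : ContinuousOn (coshP p) (Ici 0) :=
  (continuousOn_const.add ((continuousOn_sinhP hp).rpow_const fun _ _ => Or.inr (by linarith)))
    |>.rpow_const fun _ _ => Or.inr (by positivity)

lemma hasDerivAt_sinhP (hp : 1 ≤ p) {z : ℝ} (hz : 0 < z) :
    HasDerivAt (sinhP p) (coshP p z) z := by
  have hs := sinhP_pos hp hz
  have h := (hasDerivAt_arcsinhP (by linarith) hs.le).of_local_left_inverse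
    (continuousAt_sinhP hp hz) (by positivity)
    (eventually_of_mem (Ioi_mem_nhds hz) fun w hw => arcsinhP_sinhP hp (le_of_lt hw))
  rwa [rpow_neg (by positivity), inv_inv] at h

lemma hasDerivAt_coshP_rpow_sub_one (hp : 1 ≤ p) {z : ℝ} (hz : 0 < z) :
    HasDerivAt (fun w => coshP p w ^ (p - 1)) ((p - 1) * sinhP p z ^ (p - 1)) z := by
  have hs := sinhP_pos hp hz
  have hc := coshP_pos hp hz.le
  have hcp : coshP p z = (1 + sinhP p z ^ p) ^ (1 / p) := rfl
  have h := (((hasDerivAt_sinhP hp hz).rpow_const (p := p) (Or.inr hp)).const_add 1).rpow_const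
    (p := (p - 1) / p) (Or.inl (by positivity))
  have hev : (fun w => (1 + sinhP p w ^ p) ^ ((p - 1) / p)) =ᶠ[𝓝 z]
      fun w => coshP p w ^ (p - 1) := by
    filter_upwards [Ioi_mem_nhds hz] with w hw
    have := sinhP_nonneg hp (le_of_lt hw)
    rw [coshP, ← rpow_mul (by positivity), one_div_mul_eq_div]
  refine (h.congr_of_eventuallyEq hev.symm).congr_deriv ?_
  have hexp : (p - 1) / p - 1 = -(1 / p) := by field_simp; ring
  rw [hexp, rpow_neg (by positivity), ← hcp]
  field_simp

lemma hasDerivAt_sinhP_mul_coshP_rpow (hp : 1 ≤ p) {z : ℝ} (hz : 0 < z) :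
    HasDerivAt (fun w => sinhP p w * coshP p w ^ (p - 1)) (1 + p * sinhP p z ^ p) z := by
  have hs := sinhP_pos hp hz
  have hc := coshP_pos hp hz.le
  refine ((hasDerivAt_sinhP hp hz).mul (hasDerivAt_coshP_rpow_sub_one hp hz)).congr_deriv ?_
  rw [rpow_sub_one hc.ne', rpow_sub_one hs.ne', coshP_rpow hp hz.le]
  field_simp
  ring

lemma integral_one_add_mul_sinhP_rpow (hp : 1 ≤ p) {b : ℝ} (hb : 0 ≤ b) :
    ∫ z in (0:ℝ)..b, (1 + p * sinhP p z ^ p) = sinhP p b * coshP p b ^ (p - 1) := by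
  have hsub : Icc 0 b ⊆ Ici 0 := fun t ht => ht.1
  have hcs := (continuousOn_sinhP hp).mono hsub
  have hcc := (continuousOn_coshP hp).mono hsub
  rw [integral_eq_sub_of_hasDeriv_right_of_le hb
      (hcs.mul (hcc.rpow_const fun _ _ => Or.inr (by linarith)))
      (fun x hx => (hasDerivAt_sinhP_mul_coshP_rpow hp hx.1).hasDerivWithinAt)
      (ContinuousOn.intervalIntegrable_of_Icc hb (continuousOn_const.add (continuousOn_const.mul
        (hcs.rpow_const fun _ _ => Or.inr (by linarith)))))]
  simp [sinhP_zero (by linarith : (0:ℝ) ≤ p)]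

lemma intervalIntegrable_sinhP_mul_div_rpow (hp : 1 ≤ p) {K b : ℝ} (hK : 0 ≤ K) (hb : 0 ≤ b)
    (c : ℝ) : IntervalIntegrable (fun x => (sinhP p (K * x) / c) ^ p) volume 0 b :=
  ContinuousOn.intervalIntegrable_of_Icc hb <|
    (((continuousOn_sinhP hp).comp (continuous_const.mul continuous_id).continuousOn
      fun x hx => mul_nonneg hK hx.1).div_const c).rpow_const fun _ _ => Or.inr (by linarith)

lemma intervalIntegrable_mul_coshP_mul_div_rpow (hp : 1 ≤ p) {K b : ℝ} (hK : 0 ≤ K)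
    (hb : 0 ≤ b) (c : ℝ) :
    IntervalIntegrable (fun x => (K * coshP p (K * x) / c) ^ p) volume 0 b :=
  ContinuousOn.intervalIntegrable_of_Icc hb <|
    ((continuousOn_const.mul ((continuousOn_coshP hp).comp
      (continuous_const.mul continuous_id).continuousOn fun x hx => mul_nonneg hK hx.1)).div_const
        c).rpow_const fun _ _ => Or.inr (by linarith)

lemma integral_energy_sinhP_ratio (hp : 1 ≤ p) {K b : ℝ} (hK : 0 < K) (hb : 0 < b) :
    (∫ x in (0:ℝ)..b, (K * coshP p (K * x) / sinhP p (K * b)) ^ p) +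
        (p - 1) * K ^ p * ∫ x in (0:ℝ)..b, (sinhP p (K * x) / sinhP p (K * b)) ^ p =
      K ^ (p - 1) * cothP p (K * b) ^ (p - 1) := by
  set S := sinhP p (K * b)
  have hS : 0 < S := sinhP_pos hp (mul_pos hK hb)
  have hc : 0 < coshP p (K * b) := coshP_pos hp (mul_pos hK hb).le
  have hpoint : ∀ x ∈ uIcc 0 b, (K * coshP p (K * x) / S) ^ p +
      (p - 1) * K ^ p * (sinhP p (K * x) / S) ^ p =
        K ^ p / S ^ p * (1 + p * sinhP p (K * x) ^ p) := by
    intro x hx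
    rw [uIcc_of_le hb.le] at hx
    have hKx : 0 ≤ K * x := mul_nonneg hK.le hx.1
    have := sinhP_nonneg hp hKx
    have := coshP_pos hp hKx
    rw [div_rpow (by positivity) hS.le, div_rpow (by positivity) hS.le,
      mul_rpow hK.le (by positivity), coshP_rpow hp hKx]
    field_simp
    ring
  have hsub : ∫ x in (0:ℝ)..b, (1 + p * sinhP p (K * x) ^ p) =
      K⁻¹ * (S * coshP p (K * b) ^ (p - 1)) := by
    rw [integral_comp_mul_left (fun z => 1 + p * sinhP p z ^ p) hK.ne', mul_zero,
      integral_one_add_mul_sinhP_rpow hp (mul_pos hK hb).le, smul_eq_mul]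
  rw [← intervalIntegral.integral_const_mul, ← integral_add
      (intervalIntegrable_mul_coshP_mul_div_rpow hp hK.le hb.le S)
      ((intervalIntegrable_sinhP_mul_div_rpow hp hK.le hb.le S).const_mul _),
    integral_congr hpoint, intervalIntegral.integral_const_mul, hsub, cothP,
    div_rpow hc.le hS.le, rpow_sub_one hK.ne', rpow_sub_one hS.ne']
  field_simp

end PHyperbolic

section Profile

variable {p K y : ℝ}

lemma hasDerivAt_uYh_of_mem_Ioo_left (hp : 1 ≤ p) (hK : 0 < K) {x : ℝ} (hx : x ∈ Ioo 0 y) :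
    HasDerivAt (uYh p K y) (K * coshP p (K * x) / sinhP p (K * y)) x := by
  have h := ((hasDerivAt_sinhP hp (mul_pos hK hx.1)).comp x
    ((hasDerivAt_id x).const_mul K)).div_const (sinhP p (K * y))
  refine (h.congr_of_eventuallyEq ?_).congr_deriv (by simp [mul_comm])
  filter_upwards [Iio_mem_nhds hx.2] with w (hw : w < y)
  simp [uYh, le_of_lt hw]

lemma hasDerivAt_uYh_of_mem_Ioo_right (hp : 1 ≤ p) (hK : 0 < K) {x : ℝ}
    (hx : x ∈ Ioo y (piP p)) :
    HasDerivAt (uYh p K y)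
      (-(K * coshP p (K * (piP p - x)) / sinhP p (K * (piP p - y)))) x := by
  have h := ((hasDerivAt_sinhP hp (mul_pos hK (sub_pos.2 hx.2))).comp x
    (((hasDerivAt_id x).const_sub (piP p)).const_mul K)).div_const (sinhP p (K * (piP p - y)))
  refine (h.congr_of_eventuallyEq ?_).congr_deriv (by simp [mul_comm, neg_div])
  filter_upwards [Ioi_mem_nhds hx.1] with w (hw : y < w)
  simp [uYh, not_le.2 hw]

lemma abs_deriv_uYh_rpow_eqOn_Ioo_left (hp : 1 ≤ p) (hK : 0 < K) :
    EqOn (fun x => |deriv (uYh p K y) x| ^ p)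
      (fun x => (K * coshP p (K * x) / sinhP p (K * y)) ^ p) (Ioo 0 y) := by
  intro x hx
  have := coshP_pos hp (mul_pos hK hx.1).le
  have := sinhP_nonneg hp (mul_pos hK (hx.1.trans hx.2)).le
  simp only [(hasDerivAt_uYh_of_mem_Ioo_left hp hK hx).deriv]
  rw [abs_of_nonneg (by positivity)]

lemma abs_deriv_uYh_rpow_eqOn_Ioo_right (hp : 1 ≤ p) (hK : 0 < K) :
    EqOn (fun x => |deriv (uYh p K y) x| ^ p)
      ((fun x => (K * coshP p (K * x) / sinhP p (K * (piP p - y))) ^ p) ∘ (piP p - ·))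
      (Ioo y (piP p)) := by
  intro x hx
  have := coshP_pos hp (mul_pos hK (sub_pos.2 hx.2)).le
  have := sinhP_nonneg hp (mul_pos hK (sub_pos.2 (hx.1.trans hx.2))).le
  simp only [(hasDerivAt_uYh_of_mem_Ioo_right hp hK hx).deriv, abs_neg, Function.comp]
  rw [abs_of_nonneg (by positivity)]

lemma abs_uYh_rpow_eqOn_Ioo_left (hp : 1 ≤ p) (hK : 0 ≤ K) :
    EqOn (fun x => |uYh p K y x| ^ p)
      (fun x => (sinhP p (K * x) / sinhP p (K * y)) ^ p) (Ioo 0 y) := by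
  intro x hx
  have := sinhP_nonneg hp (mul_nonneg hK hx.1.le)
  have := sinhP_nonneg hp (mul_nonneg hK (hx.1.trans hx.2).le)
  simp only [uYh, if_pos hx.2.le]
  rw [abs_of_nonneg (by positivity)]

lemma abs_uYh_rpow_eqOn_Ioo_right (hp : 1 ≤ p) (hK : 0 ≤ K) :
    EqOn (fun x => |uYh p K y x| ^ p)
      ((fun x => (sinhP p (K * x) / sinhP p (K * (piP p - y))) ^ p) ∘ (piP p - ·))
      (Ioo y (piP p)) := by
  intro x hx
  have := sinhP_nonneg hp (mul_nonneg hK (sub_pos.2 hx.2).le)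
  have := sinhP_nonneg hp (mul_nonneg hK (sub_pos.2 (hx.1.trans hx.2)).le)
  simp only [uYh, if_neg (not_le.2 hx.1), Function.comp]
  rw [abs_of_nonneg (by positivity)]

end Profile

/-- For `λ < 0`, `K = (-λ/(p-1))^(1/p)` and `y ∈ (0, π_p/2]`,
`∫ |u_y'|^p - λ ∫ |u_y|^p = K^(p-1) ((coth_p (K y))^(p-1) + (coth_p (K(π_p - y)))^(p-1))`. -/
theorem J_uYh_eq (p lam K y : ℝ) (hp : 1 < p) (hlam : lam < 0)
    (hK : K = (-lam / (p - 1)) ^ (1 / p))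
    (hy0 : 0 < y) (hy : y ≤ piP p / 2) :
    (∫ x in (0:ℝ)..piP p, |deriv (uYh p K y) x| ^ p) -
        lam * ∫ x in (0:ℝ)..piP p, |uYh p K y x| ^ p =
      K ^ (p - 1) * ((cothP p (K * y)) ^ (p - 1) + (cothP p (K * (piP p - y))) ^ (p - 1)) := by
  have hc : 0 < -lam / (p - 1) := div_pos (neg_pos.2 hlam) (by linarith)
  have hKpos : 0 < K := hK ▸ rpow_pos_of_pos hc _
  have hlam_eq : lam = -((p - 1) * K ^ p) := by
    rw [hK, ← rpow_mul hc.le, one_div_mul_cancel (by linarith), rpow_one]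
    field_simp [(by linarith : p - 1 ≠ 0)]
  have hyπ : y ≤ piP p := by linarith
  have hπy : 0 < piP p - y := by linarith
  rw [integral_eq_add_of_eqOn_Ioo_of_eqOn_Ioo_comp_sub hy0.le hyπ
      (intervalIntegrable_mul_coshP_mul_div_rpow hp.le hKpos.le hy0.le _)
      (intervalIntegrable_mul_coshP_mul_div_rpow hp.le hKpos.le hπy.le _)
      (abs_deriv_uYh_rpow_eqOn_Ioo_left hp.le hKpos)
      (abs_deriv_uYh_rpow_eqOn_Ioo_right hp.le hKpos),
    integral_eq_add_of_eqOn_Ioo_of_eqOn_Ioo_comp_sub hy0.le hyπ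
      (intervalIntegrable_sinhP_mul_div_rpow hp.le hKpos.le hy0.le _)
      (intervalIntegrable_sinhP_mul_div_rpow hp.le hKpos.le hπy.le _)
      (abs_uYh_rpow_eqOn_Ioo_left hp.le hKpos.le) (abs_uYh_rpow_eqOn_Ioo_right hp.le hKpos.le),
    hlam_eq]
  linarith [integral_energy_sinhP_ratio hp.le hKpos hy0,
    integral_energy_sinhP_ratio hp.le hKpos hπy]
end
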